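/- Let G be an r-locally 2-connected graph and let {v,w} be an r-local 2-separator. Then every connected component of the punctured explorer-neighbourhood Expl(v,w) - v - w has both v and w in its neighbourhood. -/

import Mathlib

open SimpleGraph

universe u

namespace LocalSep

variable {V : Type u}

/-- The ball of radius `r/2` around `v`: vertices of distance at most `⌊r/2⌋` from `v`;
if `r` is even, edges joining two vertices of distance exactly `r/2` are removed. -/
def ballVerts (G : SimpleGraph V) (v : V) (r : ℕ) : Set V :=
  {u | G.Reachable v u ∧ G.dist v u ≤ r / 2}

def ball (G : SimpleGraph V) (v : V) (r : ℕ) : G.Subgraph where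
  verts := ballVerts G v r
  Adj u u' := G.Adj u u' ∧ u ∈ ballVerts G v r ∧ u' ∈ ballVerts G v r ∧
    (Even r → ¬(G.dist v u = r / 2 ∧ G.dist v u' = r / 2))
  adj_sub h := h.1
  edge_vert h := h.2.1
  symm := ⟨fun u u' h => ⟨h.1.symm, h.2.2.1, h.2.1, fun he hc => h.2.2.2 he ⟨hc.2, hc.1⟩⟩⟩

/-- `v` is an `r`-local cutvertex if the punctured ball `B_{r/2}(v) - v` is disconnected. -/
def IsLocalCutvertex (G : SimpleGraph V) (r : ℕ) (v : V) : Prop :=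
  ¬ ((ball G v r).deleteVerts {v}).coe.Connected

def HasShortCycle (G : SimpleGraph V) (r : ℕ) : Prop :=
  ∃ (u : V) (c : G.Walk u u), c.IsCycle ∧ c.length ≤ r

/-- A connected graph is `r`-locally 2-connected if it has no `r`-local cutvertex
and contains a cycle of length at most `r`. -/
def LocallyTwoConnected (G : SimpleGraph V) (r : ℕ) : Prop :=
  G.Connected ∧ (∀ v : V, ¬ IsLocalCutvertex G r v) ∧ HasShortCycle G r

/-- The core of `(a₁, a₂)`: all vertices on shortest `a₁`–`a₂` paths. -/
def core (G : SimpleGraph V) (a₁ a₂ : V) : Set V :=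
  {x | ∃ p : G.Walk a₁ a₂, p.IsPath ∧ p.length = G.dist a₁ a₂ ∧ x ∈ p.support}

/-- A walk is contained in a subgraph. -/
def WalkIn {G : SimpleGraph V} (B : G.Subgraph) {x y : V} (p : G.Walk x y) : Prop :=
  p.toSubgraph ≤ B

/-- The label of a vertex `u` in a ball `B`: the set of (supports of) shortest paths
from the core `C` to `u` contained in `B`. -/
def labelIn (G : SimpleGraph V) (B : G.Subgraph) (C : Set V) (u : V) : Set (List V) :=
  {l | ∃ c ∈ C, ∃ p : G.Walk c u, p.IsPath ∧ WalkIn B p ∧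
    (∀ c' ∈ C, ∀ q : G.Walk c' u, q.IsPath → WalkIn B q → p.length ≤ q.length) ∧
    l = p.support}

/-- A potential vertex of the explorer-neighbourhood: a vertex together with a label. -/
abbrev EVert (V : Type u) : Type u := V × Set (List V)

/-- `p` is the copy of the vertex `p.1` in the labelled ball around `a ∈ {a₁, a₂}`. -/
def inCopy (G : SimpleGraph V) (a₁ a₂ : V) (r : ℕ) (a : V) (p : EVert V) : Prop :=
  p.1 ∈ ballVerts G a r ∧ p.2 = labelIn G (ball G a r) (core G a₁ a₂) p.1

/-- Vertices of the explorer-neighbourhood `Expl(a₁,a₂)`. -/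
def explVerts (G : SimpleGraph V) (a₁ a₂ : V) (r : ℕ) : Set (EVert V) :=
  {p | inCopy G a₁ a₂ r a₁ p ∨ inCopy G a₁ a₂ r a₂ p}

/-- The explorer-neighbourhood `Expl(a₁,a₂)`: the union of the two labelled balls,
where two copies of a vertex are identified iff their labels agree. -/
def expl (G : SimpleGraph V) (a₁ a₂ : V) (r : ℕ) : SimpleGraph (EVert V) where
  Adj p q :=
    (inCopy G a₁ a₂ r a₁ p ∧ inCopy G a₁ a₂ r a₁ q ∧ (ball G a₁ r).Adj p.1 q.1) ∨
    (inCopy G a₁ a₂ r a₂ p ∧ inCopy G a₁ a₂ r a₂ q ∧ (ball G a₂ r).Adj p.1 q.1)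
  symm := by
    constructor
    intro p q h
    rcases h with ⟨h1, h2, h3⟩ | ⟨h1, h2, h3⟩
    · exact Or.inl ⟨h2, h1, h3.symm⟩
    · exact Or.inr ⟨h2, h1, h3.symm⟩
  loopless := by
    constructor
    intro p h
    rcases h with ⟨-, -, h⟩ | ⟨-, -, h⟩ <;> exact h.adj_sub.ne rfl

/-- Vertices of the punctured explorer-neighbourhood `Expl(a₁,a₂) - a₁ - a₂`. -/
def pexplVerts (G : SimpleGraph V) (a₁ a₂ : V) (r : ℕ) : Set (EVert V) :=
  {p | p ∈ explVerts G a₁ a₂ r ∧ p.1 ≠ a₁ ∧ p.1 ≠ a₂}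

/-- The punctured explorer-neighbourhood `Expl(a₁,a₂) - a₁ - a₂`. -/
def pexpl (G : SimpleGraph V) (a₁ a₂ : V) (r : ℕ) :
    SimpleGraph (pexplVerts G a₁ a₂ r) :=
  SimpleGraph.induce (pexplVerts G a₁ a₂ r) (expl G a₁ a₂ r)

/-- `{v,w}` is an `r`-local 2-separator: `v,w` have distance at most `r/2` and the
punctured explorer-neighbourhood is disconnected. -/
def IsLocalTwoSep (G : SimpleGraph V) (r : ℕ) (v w : V) : Prop :=
  v ≠ w ∧ G.Reachable v w ∧ 2 * G.dist v w ≤ r ∧ ¬ (pexpl G v w r).Connected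

/-- The pair `(p,q)` of vertices of `Expl(b₁,b₂)` crosses the local 2-separator `{b₁,b₂}`:
they lie in different components of the punctured explorer-neighbourhood and there is a cycle
of length at most `r` through them containing a copy of `b₁` or `b₂`. -/
def CrossesPair (G : SimpleGraph V) (r : ℕ) (b₁ b₂ : V) (p q : EVert V) : Prop :=
  ∃ (hp : p ∈ pexplVerts G b₁ b₂ r) (hq : q ∈ pexplVerts G b₁ b₂ r),
    ¬ (pexpl G b₁ b₂ r).Reachable ⟨p, hp⟩ ⟨q, hq⟩ ∧
    ∃ (u : EVert V) (c : (expl G b₁ b₂ r).Walk u u), c.IsCycle ∧ c.length ≤ r ∧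
      p ∈ c.support ∧ q ∈ c.support ∧ ∃ z ∈ c.support, z.1 = b₁ ∨ z.1 = b₂

/-- `{a₁,a₂}` crosses `{b₁,b₂}`: some copies of `a₁`, `a₂` cross `{b₁,b₂}`. -/
def Crosses (G : SimpleGraph V) (r : ℕ) (a₁ a₂ b₁ b₂ : V) : Prop :=
  ∃ p q : EVert V, p.1 = a₁ ∧ q.1 = a₂ ∧ CrossesPair G r b₁ b₂ p q

/-- Some copy of `x` lies in the same component of `Expl(v,w) - v - w` as some copy of `y`. -/
def CopyReach (G : SimpleGraph V) (r : ℕ) (v w x y : V) : Prop :=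
  ∃ (p q : EVert V) (hp : p ∈ pexplVerts G v w r) (hq : q ∈ pexplVerts G v w r),
    p.1 = x ∧ q.1 = y ∧ (pexpl G v w r).Reachable ⟨p, hp⟩ ⟨q, hq⟩

/-- A cycle through `a₁` alternating between `{a₁,a₂}` and `{b₁,b₂}`: the four vertices are
distinct and `b₁`, `b₂` lie on different arcs of the cycle between `a₁` and `a₂`. -/
def AltCycle (G : SimpleGraph V) (a₁ a₂ b₁ b₂ : V) (c : G.Walk a₁ a₁) : Prop :=
  c.IsCycle ∧ b₁ ≠ b₂ ∧ b₁ ∉ ({a₁, a₂} : Set V) ∧ b₂ ∉ ({a₁, a₂} : Set V) ∧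
  ∃ (p : G.Walk a₁ a₂) (q : G.Walk a₂ a₁), c = p.append q ∧
    ((b₁ ∈ p.support ∧ b₂ ∈ q.support) ∨ (b₂ ∈ p.support ∧ b₁ ∈ q.support))

/-- `S` is generated over `𝔽₂` by members of `C` (sum = symmetric difference). -/
def GeneratedBy {α : Type*} (C : Set (Set (Sym2 α))) (S : Set (Sym2 α)) : Prop :=
  ∃ l : List (Set (Sym2 α)), (∀ A ∈ l, A ∈ C) ∧ l.foldr symmDiff ∅ = S

/-- The edge set of a walk. -/
def walkEdgeSet {α : Type*} {H : SimpleGraph α} {x y : α} (c : H.Walk x y) : Set (Sym2 α) :=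
  {e | e ∈ c.edges}


/-! Let `K` be a component of `Expl(v,w) - v - w` and let `a ∈ {v,w}` be the centre of a ball
containing a vertex of `K`, with `b` the other one. Since `B_{r/2}(a) - a` is connected and
contains `b`, a walk inside it lifts to `K` until it first meets `b`, so `K` is adjacent to a
copy of `b`. To reach `a` as well, it suffices to find a vertex of `K` that is also a copy from
the ball around `b`, and then to run the same argument there. The last vertex `y` before `b`
provides one: either `y` is adjacent to `a`, or `y` lies in or next to a core vertex other
than `v, w` (and core vertices carry the label `{[c]}` in both balls), or `b` is the only core
neighbour of `y` in both balls, so that `y` has the label `{[b, y]}` in both. -/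

section WalkIn

variable {G : SimpleGraph V} {B : G.Subgraph}

lemma walkIn_nil {x : V} : WalkIn B (Walk.nil : G.Walk x x) ↔ x ∈ B.verts := by
  rw [WalkIn, Walk.toSubgraph, singletonSubgraph_le_iff]

lemma walkIn_cons {x y z : V} {h : G.Adj x y} {p : G.Walk y z} :
    WalkIn B (Walk.cons h p) ↔ B.Adj x y ∧ WalkIn B p := by
  rw [WalkIn, Walk.toSubgraph, sup_le_iff, subgraphOfAdj_le_iff]
  rfl

end WalkIn

section Core

variable {G : SimpleGraph V} {r : ℕ} {v w a b z : V}

lemma mem_core_of_eq (hvw : G.Reachable v w) (ha : a = v ∨ a = w) : a ∈ core G v w := by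
  obtain ⟨p, hp, hlen⟩ := hvw.exists_path_of_dist
  exact ⟨p, hp, hlen, by rcases ha with rfl | rfl <;> simp⟩

lemma exists_walks_of_mem_core (hz : z ∈ core G v w) :
    ∃ (p : G.Walk v z) (q : G.Walk z w), p.length + q.length = G.dist v w := by
  classical
  obtain ⟨p, -, hlen, hzp⟩ := hz
  refine ⟨p.takeUntil z hzp, p.dropUntil z hzp, ?_⟩
  rw [← Walk.length_append, p.take_spec hzp, hlen]

lemma reachable_of_mem_core (ha : a = v ∨ a = w) (hz : z ∈ core G v w) : G.Reachable a z := by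
  obtain ⟨p, q, -⟩ := exists_walks_of_mem_core hz
  rcases ha with rfl | rfl
  exacts [⟨p⟩, ⟨q.reverse⟩]

lemma dist_le_of_mem_core (ha : a = v ∨ a = w) (hz : z ∈ core G v w) :
    G.dist a z ≤ G.dist v w := by
  obtain ⟨p, q, hlen⟩ := exists_walks_of_mem_core hz
  rcases ha with rfl | rfl
  · have := dist_le p
    omega
  · have := dist_le q.reverse
    rw [Walk.length_reverse] at this
    omega

lemma mem_ballVerts_of_mem_core (ha : a = v ∨ a = w) (hD : G.dist v w ≤ r / 2)
    (hz : z ∈ core G v w) : z ∈ ballVerts G a r :=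
  ⟨reachable_of_mem_core ha hz, (dist_le_of_mem_core ha hz).trans hD⟩

lemma eq_of_mem_core_of_dist_eq (hab : a = v ∧ b = w ∨ a = w ∧ b = v) (hz : z ∈ core G v w)
    (h : G.dist a z = G.dist v w) : z = b := by
  obtain ⟨p, q, hlen⟩ := exists_walks_of_mem_core hz
  rcases hab with ⟨rfl, rfl⟩ | ⟨rfl, rfl⟩
  · have := dist_le p
    exact Walk.eq_of_length_eq_zero (p := q) (by omega)
  · have := dist_le q.reverse
    rw [Walk.length_reverse] at this
    exact (Walk.eq_of_length_eq_zero (p := p) (by omega)).symm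

end Core

section Label

variable {G : SimpleGraph V} {B : G.Subgraph} {C : Set V}

lemma labelIn_of_mem {c : V} (hc : c ∈ C) (hcB : c ∈ B.verts) : labelIn G B C c = {[c]} := by
  ext l
  simp only [labelIn, Set.mem_ofPred_eq, Set.mem_singleton_iff]
  constructor
  · rintro ⟨c', -, p, -, -, hmin, rfl⟩
    have : p.length = 0 := Nat.le_zero.mp (hmin c hc .nil .nil (walkIn_nil.mpr hcB))
    cases p with
    | nil => rfl
    | cons => simp at this
  · rintro rfl
    exact ⟨c, hc, .nil, .nil, walkIn_nil.mpr hcB, fun _ _ _ _ _ => Nat.zero_le _, rfl⟩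

lemma labelIn_eq_of_forall_adj_eq {c y : V} (hy : y ∉ C) (hc : c ∈ C) (hcy : B.Adj c y)
    (huniq : ∀ c' ∈ C, B.Adj c' y → c' = c) : labelIn G B C y = {[c, y]} := by
  have hedge : (Walk.cons hcy.adj_sub .nil : G.Walk c y).IsPath := by
    simp [hcy.adj_sub.ne]
  have hedgeB : WalkIn B (Walk.cons hcy.adj_sub .nil) :=
    walkIn_cons.mpr ⟨hcy, walkIn_nil.mpr hcy.snd_mem⟩
  ext l
  simp only [labelIn, Set.mem_ofPred_eq, Set.mem_singleton_iff]
  constructor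
  · rintro ⟨c', hc', p, -, hpB, hmin, rfl⟩
    have hle : p.length ≤ 1 := hmin c hc _ hedge hedgeB
    match p, hpB, hle with
    | .nil, _, _ => exact absurd hc' hy
    | .cons _ .nil, hpB, _ => obtain rfl := huniq c' hc' (walkIn_cons.mp hpB).1; rfl
    | .cons _ (.cons _ _), _, hle => simp at hle
  · rintro rfl
    refine ⟨c, hc, _, hedge, hedgeB, fun c' hc' q _ _ => ?_, rfl⟩
    cases q with
    | nil => exact absurd hc' hy
    | cons => simp

end Label

section Explorer

variable {G : SimpleGraph V} {r : ℕ} {v w a b y : V}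

def ballCopy (G : SimpleGraph V) (v w : V) (r : ℕ) (a u : V) : EVert V :=
  (u, labelIn G (ball G a r) (core G v w) u)

lemma inCopy.ballCopy_fst {p : EVert V} (h : inCopy G v w r a p) :
    ballCopy G v w r a p.1 = p :=
  Prod.ext rfl h.2.symm

lemma ballCopy_mem_pexplVerts {u : V} (ha : a = v ∨ a = w) (hu : u ∈ ballVerts G a r)
    (huv : u ≠ v) (huw : u ≠ w) : ballCopy G v w r a u ∈ pexplVerts G v w r := by
  refine ⟨?_, huv, huw⟩
  rcases ha with rfl | rfl
  exacts [Or.inl ⟨hu, rfl⟩, Or.inr ⟨hu, rfl⟩]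

lemma expl_adj_ballCopy {u u' : V} (ha : a = v ∨ a = w) (h : (ball G a r).Adj u u') :
    (expl G v w r).Adj (ballCopy G v w r a u) (ballCopy G v w r a u') := by
  rcases ha with rfl | rfl
  exacts [Or.inl ⟨⟨h.fst_mem, rfl⟩, ⟨h.snd_mem, rfl⟩, h⟩,
    Or.inr ⟨⟨h.fst_mem, rfl⟩, ⟨h.snd_mem, rfl⟩, h⟩]

lemma inCopy_ballCopy_of_mem_core {z : V} (ha : a = v ∨ a = w) (hb : b = v ∨ b = w)
    (hD : G.dist v w ≤ r / 2) (hz : z ∈ core G v w) :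
    inCopy G v w r b (ballCopy G v w r a z) := by
  have hzb := mem_ballVerts_of_mem_core hb hD hz
  refine ⟨hzb, ?_⟩
  rw [ballCopy, labelIn_of_mem hz (mem_ballVerts_of_mem_core ha hD hz), labelIn_of_mem hz hzb]

lemma inCopy_ballCopy_of_forall_adj_eq (hab : a = v ∧ b = w ∨ a = w ∧ b = v)
    (hvw : G.Reachable v w) (hne : v ≠ w) (hD : G.dist v w ≤ r / 2) (hy : y ∉ core G v w)
    (hyb : (ball G a r).Adj y b) (huniq : ∀ c ∈ core G v w, (ball G a r).Adj c y → c = b) :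
    inCopy G v w r b (ballCopy G v w r a y) := by
  have ha : a = v ∨ a = w := hab.imp And.left And.left
  have hb : b = v ∨ b = w := hab.symm.imp And.right And.right
  have hbcore := mem_core_of_eq hvw hb
  have hpos := hvw.pos_dist_of_ne hne
  have hGby : G.Adj b y := hyb.adj_sub.symm
  have hyball : y ∈ ballVerts G b r := by
    refine ⟨hGby.reachable, (dist_le hGby.toWalk).trans ?_⟩
    simp only [Walk.length_cons, Walk.length_nil]
    omega
  have hby : (ball G b r).Adj b y := by
    refine ⟨hGby, ⟨.refl b, by simp⟩, hyball, fun _ h => ?_⟩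
    rw [SimpleGraph.dist_self] at h
    omega
  have huniq' : ∀ c ∈ core G v w, (ball G b r).Adj c y → c = b := by
    intro c hc hcy
    by_contra hcb
    refine hcb (huniq c hc ⟨hcy.adj_sub, mem_ballVerts_of_mem_core ha hD hc, hyb.fst_mem, ?_⟩)
    rintro - ⟨hac, -⟩
    exact hcb (eq_of_mem_core_of_dist_eq hab hc (le_antisymm (dist_le_of_mem_core ha hc)
      (hac ▸ hD)))
  exact ⟨hyball, by rw [ballCopy, labelIn_eq_of_forall_adj_eq hy hbcore hyb.symm huniq,
    labelIn_eq_of_forall_adj_eq hy hbcore hby huniq']⟩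

variable {k : (pexpl G v w r).ConnectedComponent}

def InComp (k : (pexpl G v w r).ConnectedComponent) (p : EVert V) : Prop :=
  ∃ hp : p ∈ pexplVerts G v w r, (pexpl G v w r).connectedComponentMk ⟨p, hp⟩ = k

def Touches (k : (pexpl G v w r).ConnectedComponent) (t : V) : Prop :=
  ∃ (p : EVert V) (hp : p ∈ pexplVerts G v w r) (q : EVert V),
    (pexpl G v w r).connectedComponentMk ⟨p, hp⟩ = k ∧ q.1 = t ∧ (expl G v w r).Adj p q

lemma InComp.of_adj {p q : EVert V} (hp : InComp k p) (hq : q ∈ pexplVerts G v w r)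
    (h : (expl G v w r).Adj p q) : InComp k q := by
  obtain ⟨hp, rfl⟩ := hp
  exact ⟨hq, (ConnectedComponent.connectedComponentMk_eq_of_adj (G := pexpl G v w r)
    (v := ⟨p, hp⟩) (w := ⟨q, hq⟩) h).symm⟩

lemma touches_of_inComp_ballCopy {t : V} (ha : a = v ∨ a = w)
    (hy : InComp k (ballCopy G v w r a y)) (h : (ball G a r).Adj y t) : Touches k t :=
  ⟨_, hy.1, _, hy.2, rfl, expl_adj_ballCopy ha h⟩

lemma exists_inComp_adj_of_walkIn (ha : a = v ∨ a = w) {s t : V} (q : G.Walk s t)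
    (hq : WalkIn (ball G a r) q) (ht : t = v ∨ t = w) (hs : InComp k (ballCopy G v w r a s)) :
    ∃ y z, InComp k (ballCopy G v w r a y) ∧ z ∈ q.support ∧ (z = v ∨ z = w) ∧
      (ball G a r).Adj y z := by
  induction q with
  | nil =>
    obtain ⟨⟨-, hsv, hsw⟩, -⟩ := hs
    rcases ht with rfl | rfl
    exacts [absurd rfl hsv, absurd rfl hsw]
  | @cons s s' t h q ih =>
    obtain ⟨hss', hq⟩ := walkIn_cons.mp hq
    by_cases hs' : s' = v ∨ s' = w
    · exact ⟨s, s', hs, by simp, hs', hss'⟩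
    · push Not at hs'
      have hs'K := hs.of_adj (ballCopy_mem_pexplVerts ha hss'.snd_mem hs'.1 hs'.2)
        (expl_adj_ballCopy ha hss')
      obtain ⟨y, z, hy, hz, hzvw, hyz⟩ := ih hq ht hs'K
      exact ⟨y, z, hy, Walk.support_cons h q ▸ List.mem_cons_of_mem _ hz, hzvw, hyz⟩

lemma exists_inComp_adj_other (hab : a = v ∧ b = w ∨ a = w ∧ b = v) (hvw : G.Reachable v w)
    (hne : v ≠ w) (hD : G.dist v w ≤ r / 2) (hcut : ¬ IsLocalCutvertex G r a) {p : EVert V}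
    (hp : InComp k p) (hpa : inCopy G v w r a p) :
    ∃ y, InComp k (ballCopy G v w r a y) ∧ (ball G a r).Adj y b := by
  have ha : a = v ∨ a = w := hab.imp And.left And.left
  have hb : b = v ∨ b = w := hab.symm.imp And.right And.right
  have hba : b ≠ a := by rcases hab with ⟨rfl, rfl⟩ | ⟨rfl, rfl⟩ <;> tauto
  set H := (ball G a r).deleteVerts {a}
  have hH : H.Preconnected := (Subgraph.Connected.mk (not_not.mp hcut)).preconnected
  have hpH : p.1 ∈ H.verts :=
    ⟨hpa.1, by rcases ha with rfl | rfl; exacts [hp.1.2.1, hp.1.2.2]⟩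
  have hbH : b ∈ H.verts := ⟨mem_ballVerts_of_mem_core ha hD (mem_core_of_eq hvw hb), hba⟩
  obtain ⟨Q, hQ⟩ := (Subgraph.preconnected_iff_forall_exists_walk_subgraph H).mp hH hpH hbH
  obtain ⟨y, z, hy, hzQ, hz, hyz⟩ := exists_inComp_adj_of_walkIn ha Q
    (hQ.trans (Subgraph.deleteVerts_le)) hb (hpa.ballCopy_fst ▸ hp)
  have hza : z ≠ a := (hQ.1 (Q.mem_verts_toSubgraph.mpr hzQ)).2
  have hzb : z = b := by rcases hab with ⟨rfl, rfl⟩ | ⟨rfl, rfl⟩ <;> tauto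
  exact ⟨y, hy, hzb ▸ hyz⟩

lemma touches_or_exists_inComp_inCopy (hab : a = v ∧ b = w ∨ a = w ∧ b = v)
    (hvw : G.Reachable v w) (hne : v ≠ w) (hD : G.dist v w ≤ r / 2)
    (hy : InComp k (ballCopy G v w r a y)) (hyb : (ball G a r).Adj y b) :
    Touches k a ∨ ∃ p, InComp k p ∧ inCopy G v w r b p := by
  have ha : a = v ∨ a = w := hab.imp And.left And.left
  have hb : b = v ∨ b = w := hab.symm.imp And.right And.right
  by_cases hya : (ball G a r).Adj y a
  · exact Or.inl (touches_of_inComp_ballCopy ha hy hya)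
  right
  by_cases hz : ∃ z ∈ core G v w, z ≠ v ∧ z ≠ w ∧ (z = y ∨ (ball G a r).Adj y z)
  · obtain ⟨z, hz, hzv, hzw, hzy⟩ := hz
    have hzK : InComp k (ballCopy G v w r a z) := by
      rcases hzy with rfl | hyz
      · exact hy
      · exact hy.of_adj (ballCopy_mem_pexplVerts ha hyz.snd_mem hzv hzw) (expl_adj_ballCopy ha hyz)
    exact ⟨_, hzK, inCopy_ballCopy_of_mem_core ha hb hD hz⟩
  push Not at hz
  have hycore : y ∉ core G v w := fun h => (hz y h hy.1.2.1 hy.1.2.2).1 rfl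
  refine ⟨_, hy, inCopy_ballCopy_of_forall_adj_eq hab hvw hne hD hycore hyb fun c hc hcy => ?_⟩
  by_contra hcb
  have hca : c ≠ a := by rintro rfl; exact hya hcy.symm
  have hcvw : c ≠ v ∧ c ≠ w := by rcases hab with ⟨rfl, rfl⟩ | ⟨rfl, rfl⟩ <;> tauto
  exact (hz c hc hcvw.1 hcvw.2).2 hcy.symm

lemma touches_of_inComp_inCopy (hab : a = v ∧ b = w ∨ a = w ∧ b = v) (hvw : G.Reachable v w)
    (hne : v ≠ w) (hD : G.dist v w ≤ r / 2) (hcut_a : ¬ IsLocalCutvertex G r a)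
    (hcut_b : ¬ IsLocalCutvertex G r b) {p : EVert V} (hp : InComp k p)
    (hpa : inCopy G v w r a p) : Touches k a ∧ Touches k b := by
  obtain ⟨y, hy, hyb⟩ := exists_inComp_adj_other hab hvw hne hD hcut_a hp hpa
  refine ⟨?_, touches_of_inComp_ballCopy (hab.imp And.left And.left) hy hyb⟩
  obtain h | ⟨q, hq, hqb⟩ := touches_or_exists_inComp_inCopy hab hvw hne hD hy hyb
  · exact h
  · obtain ⟨y', hy', hy'a⟩ := exists_inComp_adj_other (hab.symm.imp And.symm And.symm) hvw hne
      hD hcut_b hq hqb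
    exact touches_of_inComp_ballCopy (hab.symm.imp And.right And.right) hy' hy'a

end Explorer

/-- In an `r`-locally 2-connected graph, every component of the punctured
explorer-neighbourhood of an `r`-local 2-separator `{v,w}` has both `v` and `w` in its
neighbourhood. -/
theorem stmt8 {V : Type u} (G : SimpleGraph V) (r : ℕ)
    (h2c : LocallyTwoConnected G r) (v w : V) (hsep : IsLocalTwoSep G r v w)
    (k : (pexpl G v w r).ConnectedComponent) :
    (∃ (p : EVert V) (hp : p ∈ pexplVerts G v w r) (q : EVert V),
      (pexpl G v w r).connectedComponentMk ⟨p, hp⟩ = k ∧ q.1 = v ∧ (expl G v w r).Adj p q) ∧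
    (∃ (p : EVert V) (hp : p ∈ pexplVerts G v w r) (q : EVert V),
      (pexpl G v w r).connectedComponentMk ⟨p, hp⟩ = k ∧ q.1 = w ∧ (expl G v w r).Adj p q) := by
  obtain ⟨hne, hvw, hD, -⟩ := hsep
  have hD' : G.dist v w ≤ r / 2 := by omega
  have hcut := h2c.2.1
  obtain ⟨⟨p, hp⟩, rfl⟩ := k.exists_rep
  have hpK : InComp ((pexpl G v w r).connectedComponentMk ⟨p, hp⟩) p := ⟨hp, rfl⟩
  rcases hp.1 with hpv | hpw
  · exact touches_of_inComp_inCopy (Or.inl ⟨rfl, rfl⟩) hvw hne hD' (hcut v) (hcut w) hpK hpv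
  · exact (touches_of_inComp_inCopy (Or.inr ⟨rfl, rfl⟩) hvw hne hD' (hcut w) (hcut v) hpK
      hpw).symm

end LocalSep
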